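/- arXiv:2409.01379 — 2 statements merged into one kernel-verified Lean document; each statement's English description precedes it below -/
import Mathlib

section
/- Consider fillings of a k × (n−k) grid of boxes by integers a(i,j), with degree contributions as follows: for each pair of boxes on the same diagonal (i+j constant along the anti-diagonal rule m = i+j−1), contribute −2|a_p − a_q|; for each pair of entries on adjacent diagonals, contribute |a_p − a_q|; and for each entry on diagonal k or diagonal n−k, contribute |a_p|. Then the total degree of any filling is nonnegative, and it equals 0 only for the all-zero filling. -/
open Finset

/-- indicator step function -/
def fchi (t x : ℤ) : ℤ := if t < x then 1 else 0

lemma fchi_01 (t x : ℤ) : fchi t x = 0 ∨ fchi t x = 1 := by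
  unfold fchi; split_ifs <;> simp

lemma layer (M : ℕ) (x y : ℤ) (hx : |x| ≤ M) (hy : |y| ≤ M) :
    |x - y| = ∑ t ∈ Finset.Ico (-(M:ℤ)) M, |fchi t x - fchi t y| := by
  have key : ∀ u v : ℤ, v ≤ u → |u| ≤ M → |v| ≤ M →
      |u - v| = ∑ t ∈ Finset.Ico (-(M:ℤ)) M, |fchi t u - fchi t v| := by
    intro u v huv hu hv
    have h1 : ∀ t : ℤ, |fchi t u - fchi t v| = if t ∈ Finset.Ico v u then 1 else 0 := by
      intro t
      simp only [Finset.mem_Ico]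
      unfold fchi
      split_ifs <;> simp_all <;> omega
    rw [Finset.sum_congr rfl (fun t _ => h1 t), Finset.sum_ite_mem]
    have hsub : Finset.Ico (-(M:ℤ)) M ∩ Finset.Ico v u = Finset.Ico v u := by
      rw [Finset.inter_eq_right]
      apply Finset.Ico_subset_Ico
      · rw [abs_le] at hv; exact hv.1
      · rw [abs_le] at hu; exact hu.2
    rw [hsub, Finset.sum_const, nsmul_eq_mul, mul_one, Int.card_Ico_of_le _ _ huv,
      abs_of_nonneg (sub_nonneg.mpr huv)]
  rcases le_total y x with h | h
  · exact key x y h hx hy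
  · rw [abs_sub_comm, key y x h hy hx]
    exact Finset.sum_congr rfl (fun t _ => by rw [abs_sub_comm])

/-- the m'-th diagonal of the grid -/
def fdiag (k n m' : ℕ) : Finset (Fin k × Fin (n-k)) :=
  Finset.univ.filter (fun b => b.1.1 + b.2.1 + 1 = m')

lemma card_fdiag (k n : ℕ) (hk : 0 < k) (hkn : 2 * k ≤ n) (m' : ℕ) :
    (fdiag k n m').card = min k (min m' (n - m')) := by
  have h : (fdiag k n m').card = (Finset.Ico (m' - (n-k)) (min m' k)).card := by
    apply Finset.card_bij (fun b _ => b.1.1)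
    · intro b hb
      simp only [fdiag, Finset.mem_filter, Finset.mem_univ, true_and] at hb
      have h1 := b.1.2
      have h2 := b.2.2
      simp only [Finset.mem_Ico]
      omega
    · intro b hb b' hb' hee
      simp only [fdiag, Finset.mem_filter, Finset.mem_univ, true_and] at hb hb'
      have : b.1 = b'.1 := Fin.ext hee
      have : b.2 = b'.2 := Fin.ext (by omega)
      exact Prod.ext (Fin.ext hee) this
    · intro i hi
      simp only [Finset.mem_Ico] at hi
      refine ⟨(⟨i, by omega⟩, ⟨m' - 1 - i, by omega⟩), ?_, rfl⟩
      simp only [fdiag, Finset.mem_filter, Finset.mem_univ, true_and]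
      omega
  rw [h, Nat.card_Ico]
  omega

lemma quad_nonneg (d e : ℤ) (h1 : -1 ≤ e) (h2 : e ≤ 1) : 0 ≤ d * (d - e) := by
  rcases lt_trichotomy d 0 with h | h | h
  · have : d ≤ -1 := by omega
    nlinarith
  · simp [h]
  · have : 1 ≤ d := by omega
    nlinarith

lemma key0 (k n : ℕ) (hk : 0 < k) (hkn : 2 * k ≤ n)
    (m : Fin k × Fin (n - k) → ℕ) (hm : ∀ b, m b = b.1.1 + b.2.1 + 1)
    (c : Fin k × Fin (n - k) → ℤ) (hc : ∀ b, c b = 0 ∨ c b = 1)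
    (D : ℤ)
    (hD : D = (∑ b, ∑ b', if b ≠ b' ∧ m b = m b' then -|c b - c b'| else 0)
      + (∑ b, ∑ b', if m b' = m b + 1 then |c b - c b'| else 0)
      + (∑ b, ((if m b = k then |c b| else 0) + (if m b = n - k then |c b| else 0)))) :
    0 ≤ D ∧ (D = 0 → ∀ b, c b = 0) := by
  classical
  set v : ℕ → ℤ := fun m' => ((fdiag k n m').card : ℤ) with hvdef
  set s : ℕ → ℤ := fun m' => ∑ b ∈ fdiag k n m', c b with hsdef
  have hdiagmem : ∀ (m' : ℕ) (b : Fin k × Fin (n-k)), b ∈ fdiag k n m' → b.1.1 + b.2.1 + 1 = m' := by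
    intro m' b hb
    simpa [fdiag] using hb
  have hfib : ∀ F : Fin k × Fin (n-k) → ℤ,
      ∑ b, F b = ∑ m' ∈ Finset.range (n+1), ∑ b ∈ fdiag k n m', F b := by
    intro F
    unfold fdiag
    exact (Finset.sum_fiberwise_of_maps_to (fun b _ => Finset.mem_range.mpr
      (by have := b.1.2; have := b.2.2; omega)) F).symm
  have habs : ∀ x y : ℤ, (x = 0 ∨ x = 1) → (y = 0 ∨ y = 1) → |x - y| = x + y - 2*(x*y) := by
    rintro x y (rfl | rfl) (rfl | rfl) <;> norm_num
  have hdiag_empty : ∀ m', n ≤ m' → fdiag k n m' = ∅ := by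
    intro m' hm'
    apply Finset.eq_empty_of_forall_notMem
    intro b hb
    have := hdiagmem m' b hb
    have := b.1.2
    have := b.2.2
    omega
  have hs_nonneg : ∀ m', 0 ≤ s m' := by
    intro m'
    apply Finset.sum_nonneg
    intro b _
    rcases hc b with h | h <;> omega
  have hsv : ∀ m', s m' ≤ v m' := by
    intro m'
    calc s m' ≤ ∑ _b ∈ fdiag k n m', (1:ℤ) := by
          apply Finset.sum_le_sum
          intro b _
          rcases hc b with h | h <;> omega
      _ = v m' := by simp [hvdef]
  have hv : ∀ m', v m' = ((min k (min m' (n - m')) : ℕ) : ℤ) := by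
    intro m'
    simp [hvdef, card_fdiag k n hk hkn]
  -- sum evaluation helper
  have hdsum : ∀ d e : Finset (Fin k × Fin (n-k)),
      ∑ b ∈ d, ∑ b' ∈ e, (c b + c b' - 2*(c b * c b'))
        = (∑ b ∈ d, c b) * (e.card:ℤ) + (d.card:ℤ) * (∑ b' ∈ e, c b')
            - 2*((∑ b ∈ d, c b) * (∑ b' ∈ e, c b')) := by
    intro d e
    have h1 : ∀ b, ∑ b' ∈ e, (c b + c b' - 2*(c b * c b'))
        = c b * (e.card:ℤ) + (∑ b' ∈ e, c b') - 2*(c b * (∑ b' ∈ e, c b')) := by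
      intro b
      rw [Finset.sum_sub_distrib, Finset.sum_add_distrib, Finset.sum_const, nsmul_eq_mul,
        ← Finset.mul_sum, ← Finset.mul_sum]
      ring
    rw [Finset.sum_congr rfl (fun b _ => h1 b), Finset.sum_sub_distrib, Finset.sum_add_distrib,
      Finset.sum_const, nsmul_eq_mul, Finset.sum_mul, ← Finset.mul_sum, ← Finset.sum_mul,
      ← Finset.sum_mul]
  -- Term 1 : same-diagonal contributions
  have hT1 : (∑ b, ∑ b', if b ≠ b' ∧ m b = m b' then -|c b - c b'| else 0)
      = ∑ m' ∈ Finset.range (n+1), -(s m' * v m' + v m' * s m' - 2*(s m' * s m')) := by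
    have hsummand1 : ∀ b b' : Fin k × Fin (n-k),
        (if b ≠ b' ∧ m b = m b' then -|c b - c b'| else 0)
          = (if b'.1.1 + b'.2.1 + 1 = b.1.1 + b.2.1 + 1 then -(c b + c b' - 2*(c b * c b')) else 0) := by
      intro b b'
      by_cases hbe : b = b'
      · subst hbe
        rcases hc b with h | h <;> simp [h]
      · by_cases hmm : m b = m b'
        · rw [if_pos ⟨hbe, hmm⟩, if_pos (by rw [← hm b, ← hm b']; exact hmm.symm),
            habs _ _ (hc b) (hc b')]
        · rw [if_neg (by tauto), if_neg (by rw [← hm b, ← hm b']; exact fun hh => hmm hh.symm)]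
    simp only [hsummand1]
    have hinner : ∀ b : Fin k × Fin (n-k),
        (∑ b', if b'.1.1 + b'.2.1 + 1 = b.1.1 + b.2.1 + 1 then -(c b + c b' - 2*(c b * c b')) else 0)
          = ∑ b' ∈ fdiag k n (b.1.1 + b.2.1 + 1), -(c b + c b' - 2*(c b * c b')) := by
      intro b
      unfold fdiag
      exact (Finset.sum_filter _ _).symm
    simp only [hinner]
    rw [hfib]
    apply Finset.sum_congr rfl
    intro m' _
    rw [Finset.sum_congr rfl (fun b hb => by rw [hdiagmem m' b hb])]
    simp only [Finset.sum_neg_distrib]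
    rw [hdsum]
  -- Term 2 : adjacent-diagonal contributions
  have hT2 : (∑ b, ∑ b', if m b' = m b + 1 then |c b - c b'| else 0)
      = ∑ m' ∈ Finset.range (n+1),
          (s m' * v (m'+1) + v m' * s (m'+1) - 2*(s m' * s (m'+1))) := by
    have hsummand2 : ∀ b b' : Fin k × Fin (n-k),
        (if m b' = m b + 1 then |c b - c b'| else 0)
          = (if b'.1.1 + b'.2.1 + 1 = (b.1.1 + b.2.1 + 1) + 1 then (c b + c b' - 2*(c b * c b')) else 0) := by
      intro b b'
      rw [hm b, hm b', habs _ _ (hc b) (hc b')]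
    simp only [hsummand2]
    have hinner : ∀ b : Fin k × Fin (n-k),
        (∑ b', if b'.1.1 + b'.2.1 + 1 = (b.1.1 + b.2.1 + 1) + 1 then (c b + c b' - 2*(c b * c b')) else 0)
          = ∑ b' ∈ fdiag k n ((b.1.1 + b.2.1 + 1) + 1), (c b + c b' - 2*(c b * c b')) := by
      intro b
      unfold fdiag
      exact (Finset.sum_filter _ _).symm
    simp only [hinner]
    rw [hfib]
    apply Finset.sum_congr rfl
    intro m' _
    rw [Finset.sum_congr rfl (fun b hb => by rw [hdiagmem m' b hb]), hdsum]
  -- Term 3 : boundary contributions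
  have hT3 : (∑ b, ((if m b = k then |c b| else 0) + (if m b = n - k then |c b| else 0)))
      = s k + s (n - k) := by
    have hsummand3 : ∀ b : Fin k × Fin (n-k),
        ((if m b = k then |c b| else 0) + (if m b = n - k then |c b| else 0))
          = ((if b.1.1 + b.2.1 + 1 = k then c b else 0) + (if b.1.1 + b.2.1 + 1 = n - k then c b else 0)) := by
      intro b
      rw [hm b, abs_of_nonneg (by rcases hc b with h | h <;> omega)]
    simp only [hsummand3]
    rw [Finset.sum_add_distrib]
    congr 1 <;> (simp only [hsdef]; unfold fdiag; exact (Finset.sum_filter _ _).symm)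
  -- assemble
  set f : ℕ → ℤ := fun m' => s m' * (v m' - s m') with hfdef
  set E : ℕ → ℤ := fun m' => (s m' - s (m'+1)) * ((s m' - s (m'+1)) - (v m' - v (m'+1))) with hEdef
  have hdiag0 : fdiag k n 0 = ∅ := by
    apply Finset.eq_empty_of_forall_notMem
    intro b hb
    have := hdiagmem 0 b hb
    omega
  have hs_big : ∀ m', n ≤ m' → s m' = 0 := by
    intro m' h
    simp [hsdef, hdiag_empty m' h]
  have hcomb : D = (∑ m' ∈ Finset.range (n+1), E m') + (s k + s (n-k)) := by
    rw [hD, hT1, hT2, hT3, ← Finset.sum_add_distrib]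
    have hptw : ∀ m', -(s m' * v m' + v m' * s m' - 2*(s m' * s m'))
        + (s m' * v (m'+1) + v m' * s (m'+1) - 2*(s m' * s (m'+1)))
          = E m' + (f (m'+1) - f m') := by
      intro m'
      simp only [hEdef, hfdef]
      ring
    rw [Finset.sum_congr rfl (fun m' _ => hptw m'), Finset.sum_add_distrib,
      Finset.sum_range_sub f]
    have h1 : f (n+1) = 0 := by
      simp [hfdef, hs_big (n+1) (by omega)]
    have h2 : f 0 = 0 := by
      simp [hfdef, hsdef, hdiag0]
    rw [h1, h2]
    ring
  have hvd : ∀ m', -1 ≤ v m' - v (m'+1) ∧ v m' - v (m'+1) ≤ 1 := by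
    intro m'
    rw [hv m', hv (m'+1)]
    constructor <;> omega
  have hEnn : ∀ m' ∈ Finset.range (n+1), 0 ≤ E m' := by
    intro m' _
    rw [hEdef]
    exact quad_nonneg _ _ (hvd m').1 (hvd m').2
  have hDnn : 0 ≤ D := by
    rw [hcomb]
    have h1 := Finset.sum_nonneg hEnn
    have h2 := hs_nonneg k
    have h3 := hs_nonneg (n-k)
    linarith
  refine ⟨hDnn, ?_⟩
  intro hD0
  have hsumE := Finset.sum_nonneg hEnn
  have hsk : s k = 0 := by
    have := hs_nonneg k; have := hs_nonneg (n-k); rw [hcomb] at hD0; linarith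
  have hsnk : s (n-k) = 0 := by
    have := hs_nonneg k; have := hs_nonneg (n-k); rw [hcomb] at hD0; linarith
  have hsum0 : ∑ m' ∈ Finset.range (n+1), E m' = 0 := by
    rw [hcomb] at hD0
    have := hs_nonneg k; have := hs_nonneg (n-k)
    linarith
  have hE0 : ∀ m' ∈ Finset.range (n+1), E m' = 0 :=
    (Finset.sum_eq_zero_iff_of_nonneg hEnn).mp hsum0
  -- region step facts
  have hstepL : ∀ m' < k, s m' ≤ s (m'+1) := by
    intro m' h
    have he := hE0 m' (Finset.mem_range.mpr (by omega))
    simp only [hEdef] at he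
    have hvv : v m' - v (m'+1) = -1 := by
      rw [hv m', hv (m'+1)]; omega
    rw [hvv] at he
    rcases mul_eq_zero.mp he with h0 | h0 <;> omega
  have hstepM : ∀ m', k ≤ m' → m' < n - k → s (m'+1) = s m' := by
    intro m' h1 h2
    have he := hE0 m' (Finset.mem_range.mpr (by omega))
    simp only [hEdef] at he
    have hvv : v m' - v (m'+1) = 0 := by
      rw [hv m', hv (m'+1)]; omega
    rw [hvv] at he
    rcases mul_eq_zero.mp he with h0 | h0 <;> omega
  have hstepR : ∀ m', n - k ≤ m' → m' < n → s (m'+1) ≤ s m' := by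
    intro m' h1 h2
    have he := hE0 m' (Finset.mem_range.mpr (by omega))
    simp only [hEdef] at he
    have hvv : v m' - v (m'+1) = 1 := by
      rw [hv m', hv (m'+1)]; omega
    rw [hvv] at he
    rcases mul_eq_zero.mp he with h0 | h0 <;> omega
  -- propagate zeros
  have hzeroL : ∀ i, i ≤ k → s (k - i) = 0 := by
    intro i
    induction i with
    | zero => intro _; simpa using hsk
    | succ j ih =>
      intro hj
      have h1 : k - (j+1) < k := by omega
      have h2 := hstepL (k - (j+1)) h1
      rw [show k - (j+1) + 1 = k - j from by omega] at h2
      have h4 := ih (by omega)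
      have h5 := hs_nonneg (k - (j+1))
      omega
  have hzeroM : ∀ i, k + i ≤ n - k → s (k + i) = 0 := by
    intro i
    induction i with
    | zero => intro _; simpa using hsk
    | succ j ih =>
      intro hj
      have h2 := hstepM (k + j) (by omega) (by omega)
      rw [show k + j + 1 = k + (j+1) from rfl] at h2
      rw [h2, ih (by omega)]
  have hzeroR : ∀ i, s (n - k + i) = 0 := by
    intro i
    induction i with
    | zero => simpa using hsnk
    | succ j ih =>
      by_cases hbig : n ≤ n - k + (j+1)
      · exact hs_big _ hbig
      · have h2 := hstepR (n - k + j) (by omega) (by omega)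
        rw [show n - k + j + 1 = n - k + (j+1) from rfl] at h2
        have h5 := hs_nonneg (n - k + (j+1))
        omega
  have hszero : ∀ m', s m' = 0 := by
    intro m'
    rcases le_total m' k with h | h
    · have := hzeroL (k - m') (by omega)
      rwa [show k - (k - m') = m' from by omega] at this
    · rcases le_total m' (n-k) with h2 | h2
      · have := hzeroM (m' - k) (by omega)
        rwa [show k + (m' - k) = m' from by omega] at this
      · have := hzeroR (m' - (n-k))
        rwa [show n - k + (m' - (n-k)) = m' from by omega] at this
  intro b
  have hb : b ∈ fdiag k n (b.1.1 + b.2.1 + 1) := by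
    simp [fdiag]
  have hzz : ∑ x ∈ fdiag k n (b.1.1 + b.2.1 + 1), c x = 0 := by
    have := hszero (b.1.1 + b.2.1 + 1)
    simpa [hsdef] using this
  exact (Finset.sum_eq_zero_iff_of_nonneg
    (fun x _ => by rcases hc x with h | h <;> omega)).mp hzz b hb

lemma keyz (k n : ℕ) (hk : 0 < k) (hkn : 2 * k ≤ n)
    (m : Fin k × Fin (n - k) → ℕ) (hm : ∀ b, m b = b.1.1 + b.2.1 + 1)
    (c : Fin k × Fin (n - k) → ℤ) (hc : ∀ b, c b = 0 ∨ c b = 1)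
    (z : ℤ) (hz : z = 0 ∨ z = 1)
    (D : ℤ)
    (hD : D = (∑ b, ∑ b', if b ≠ b' ∧ m b = m b' then -|c b - c b'| else 0)
      + (∑ b, ∑ b', if m b' = m b + 1 then |c b - c b'| else 0)
      + (∑ b, ((if m b = k then |c b - z| else 0) + (if m b = n - k then |c b - z| else 0)))) :
    0 ≤ D ∧ (D = 0 → ∀ b, c b = z) := by
  rcases hz with rfl | rfl
  · exact key0 k n hk hkn m hm c hc D (by rw [hD]; simp only [sub_zero])
  · set c' : Fin k × Fin (n-k) → ℤ := fun b => 1 - c b with hc'def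
    have hc' : ∀ b, c' b = 0 ∨ c' b = 1 := by
      intro b
      rcases hc b with h | h <;> simp [hc'def, h]
    have habs2 : ∀ b b' : Fin k × Fin (n-k), |c b - c b'| = |c' b - c' b'| := by
      intro b b'
      have : c' b - c' b' = -(c b - c b') := by simp only [hc'def]; ring
      rw [this, abs_neg]
    have habs3 : ∀ b : Fin k × Fin (n-k), |c b - 1| = |c' b| := by
      intro b
      have : c' b = -(c b - 1) := by simp only [hc'def]; ring
      rw [this, abs_neg]
    have hD' : D = (∑ b, ∑ b', if b ≠ b' ∧ m b = m b' then -|c' b - c' b'| else 0)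
      + (∑ b, ∑ b', if m b' = m b + 1 then |c' b - c' b'| else 0)
      + (∑ b, ((if m b = k then |c' b| else 0) + (if m b = n - k then |c' b| else 0))) := by
      rw [hD]
      congr 1
      · congr 1
        · exact Finset.sum_congr rfl (fun b _ => Finset.sum_congr rfl (fun b' _ => by
            rw [habs2 b b']))
        · exact Finset.sum_congr rfl (fun b _ => Finset.sum_congr rfl (fun b' _ => by
            rw [habs2 b b']))
      · exact Finset.sum_congr rfl (fun b _ => by rw [habs3 b])
    obtain ⟨h1, h2⟩ := key0 k n hk hkn m hm c' hc' D hD'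
    refine ⟨h1, fun h0 b => ?_⟩
    have := h2 h0 b
    simp only [hc'def] at this
    omega

/-- The degree of a filling of a `k × (n-k)` grid (boxes grouped into diagonals
`m = i + j - 1`): same-diagonal pairs contribute `-2|a_p - a_q|`, pairs on adjacent
diagonals contribute `|a_p - a_q|`, and entries on diagonals `k` and `n-k` contribute
`|a_p|` each.  The total degree is nonnegative, and is zero only for the zero filling. -/
theorem filling_degree_nonneg (k n : ℕ) (hk : 0 < k) (hkn : 2 * k ≤ n)
    (a : Fin k × Fin (n - k) → ℤ)
    (m : Fin k × Fin (n - k) → ℕ) (hm : ∀ b, m b = b.1.1 + b.2.1 + 1)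
    (deg : ℤ)
    (hdeg : deg =
      (∑ b, ∑ b', if b ≠ b' ∧ m b = m b' then -|a b - a b'| else 0)
      + (∑ b, ∑ b', if m b' = m b + 1 then |a b - a b'| else 0)
      + (∑ b, ((if m b = k then |a b| else 0) + (if m b = n - k then |a b| else 0)))) :
    0 ≤ deg ∧ (deg = 0 ↔ ∀ b, a b = 0) := by
  classical
  set M : ℕ := Finset.univ.sup (fun b : Fin k × Fin (n-k) => (a b).natAbs) with hMdef
  have hM : ∀ b, |a b| ≤ (M:ℤ) := by
    intro b
    rw [Int.abs_eq_natAbs]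
    exact_mod_cast Finset.le_sup (f := fun b => (a b).natAbs) (Finset.mem_univ b)
  have hM0 : |(0:ℤ)| ≤ (M:ℤ) := by simp
  set T := Finset.Ico (-(M:ℤ)) (M:ℤ) with hTdef
  set Dt : ℤ → ℤ := fun t =>
      (∑ b, ∑ b', if b ≠ b' ∧ m b = m b' then -|fchi t (a b) - fchi t (a b')| else 0)
      + (∑ b, ∑ b', if m b' = m b + 1 then |fchi t (a b) - fchi t (a b')| else 0)
      + (∑ b, ((if m b = k then |fchi t (a b) - fchi t 0| else 0)
          + (if m b = n - k then |fchi t (a b) - fchi t 0| else 0))) with hDtdef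
  have hlayer : ∀ x : ℤ, |x| ≤ (M:ℤ) → ∀ y : ℤ, |y| ≤ (M:ℤ) →
      |x - y| = ∑ t ∈ T, |fchi t x - fchi t y| := by
    intro x hx y hy
    rw [hTdef]
    exact layer M x y hx hy
  have hlayer0 : ∀ x : ℤ, |x| ≤ (M:ℤ) → |x| = ∑ t ∈ T, |fchi t x - fchi t 0| := by
    intro x hx
    have h := hlayer x hx 0 hM0
    rwa [sub_zero] at h
  have eA : (∑ b, ∑ b', if b ≠ b' ∧ m b = m b' then -|a b - a b'| else 0)
      = ∑ t ∈ T, ∑ b, ∑ b', (if b ≠ b' ∧ m b = m b' then -|fchi t (a b) - fchi t (a b')| else 0) := by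
    have e1 : ∀ b b' : Fin k × Fin (n-k),
        (if b ≠ b' ∧ m b = m b' then -|a b - a b'| else 0)
          = ∑ t ∈ T, (if b ≠ b' ∧ m b = m b' then -|fchi t (a b) - fchi t (a b')| else 0) := by
      intro b b'
      split_ifs with h
      · rw [hlayer (a b) (hM b) (a b') (hM b'), ← Finset.sum_neg_distrib]
      · exact Finset.sum_const_zero.symm
    calc (∑ b, ∑ b', if b ≠ b' ∧ m b = m b' then -|a b - a b'| else 0)
        = ∑ b, ∑ b', ∑ t ∈ T, (if b ≠ b' ∧ m b = m b' then -|fchi t (a b) - fchi t (a b')| else 0) := by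
          exact Finset.sum_congr rfl (fun b _ => Finset.sum_congr rfl (fun b' _ => e1 b b'))
      _ = ∑ b, ∑ t ∈ T, ∑ b', (if b ≠ b' ∧ m b = m b' then -|fchi t (a b) - fchi t (a b')| else 0) :=
          Finset.sum_congr rfl (fun b _ => Finset.sum_comm)
      _ = ∑ t ∈ T, ∑ b, ∑ b', (if b ≠ b' ∧ m b = m b' then -|fchi t (a b) - fchi t (a b')| else 0) :=
          Finset.sum_comm
  have eB : (∑ b, ∑ b', if m b' = m b + 1 then |a b - a b'| else 0)
      = ∑ t ∈ T, ∑ b, ∑ b', (if m b' = m b + 1 then |fchi t (a b) - fchi t (a b')| else 0) := by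
    have e2 : ∀ b b' : Fin k × Fin (n-k),
        (if m b' = m b + 1 then |a b - a b'| else 0)
          = ∑ t ∈ T, (if m b' = m b + 1 then |fchi t (a b) - fchi t (a b')| else 0) := by
      intro b b'
      split_ifs with h
      · exact hlayer (a b) (hM b) (a b') (hM b')
      · exact Finset.sum_const_zero.symm
    calc (∑ b, ∑ b', if m b' = m b + 1 then |a b - a b'| else 0)
        = ∑ b, ∑ b', ∑ t ∈ T, (if m b' = m b + 1 then |fchi t (a b) - fchi t (a b')| else 0) :=
          Finset.sum_congr rfl (fun b _ => Finset.sum_congr rfl (fun b' _ => e2 b b'))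
      _ = ∑ b, ∑ t ∈ T, ∑ b', (if m b' = m b + 1 then |fchi t (a b) - fchi t (a b')| else 0) :=
          Finset.sum_congr rfl (fun b _ => Finset.sum_comm)
      _ = ∑ t ∈ T, ∑ b, ∑ b', (if m b' = m b + 1 then |fchi t (a b) - fchi t (a b')| else 0) :=
          Finset.sum_comm
  have eC : (∑ b, ((if m b = k then |a b| else 0) + (if m b = n - k then |a b| else 0)))
      = ∑ t ∈ T, ∑ b, ((if m b = k then |fchi t (a b) - fchi t 0| else 0)
          + (if m b = n - k then |fchi t (a b) - fchi t 0| else 0)) := by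
    have e3 : ∀ b : Fin k × Fin (n-k),
        ((if m b = k then |a b| else 0) + (if m b = n - k then |a b| else 0))
          = ∑ t ∈ T, ((if m b = k then |fchi t (a b) - fchi t 0| else 0)
              + (if m b = n - k then |fchi t (a b) - fchi t 0| else 0)) := by
      intro b
      rw [Finset.sum_add_distrib]
      congr 1
      · split_ifs with h
        · exact hlayer0 (a b) (hM b)
        · exact Finset.sum_const_zero.symm
      · split_ifs with h
        · exact hlayer0 (a b) (hM b)
        · exact Finset.sum_const_zero.symm
    calc (∑ b, ((if m b = k then |a b| else 0) + (if m b = n - k then |a b| else 0)))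
        = ∑ b, ∑ t ∈ T, ((if m b = k then |fchi t (a b) - fchi t 0| else 0)
            + (if m b = n - k then |fchi t (a b) - fchi t 0| else 0)) :=
          Finset.sum_congr rfl (fun b _ => e3 b)
      _ = ∑ t ∈ T, ∑ b, ((if m b = k then |fchi t (a b) - fchi t 0| else 0)
            + (if m b = n - k then |fchi t (a b) - fchi t 0| else 0)) :=
          Finset.sum_comm
  have hsplit : deg = ∑ t ∈ T, Dt t := by
    rw [hdeg, eA, eB, eC, ← Finset.sum_add_distrib, ← Finset.sum_add_distrib]
  have hDt : ∀ t, 0 ≤ Dt t ∧ (Dt t = 0 → ∀ b, fchi t (a b) = fchi t 0) := by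
    intro t
    exact keyz k n hk hkn m hm (fun b => fchi t (a b)) (fun b => fchi_01 t (a b))
      (fchi t 0) (fchi_01 t 0) (Dt t) (by rw [hDtdef])
  constructor
  · rw [hsplit]
    exact Finset.sum_nonneg (fun t _ => (hDt t).1)
  constructor
  · intro h0
    have hall : ∀ t ∈ T, Dt t = 0 :=
      (Finset.sum_eq_zero_iff_of_nonneg (fun t _ => (hDt t).1)).mp (by rw [← hsplit]; exact h0)
    intro b
    have habz : |a b| = 0 := by
      rw [hlayer0 (a b) (hM b)]
      exact Finset.sum_eq_zero (fun t ht => by rw [(hDt t).2 (hall t ht) b, sub_self, abs_zero])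
    exact abs_eq_zero.mp habz
  · intro ha
    rw [hdeg]
    simp [ha]
end

section
/- Consider the cylindrical KLRW winding statistic a'(i) for words i consisting of one each of black letters 1, ..., n−1 and two red letters (red 1 at the start position and red n−1): a'(i) is the number of leftward jumps when visiting red 1, then 1, 2, ..., n−1 in order, then red n−1, cyclically in the word. Then a'(i) takes exactly the values 0, 1, ..., n−1 as i ranges over all cyclic words, with a'(red1, 1, 2, ..., n−1, red(n−1)) = 0 and a'(red1, red(n−1), n−1, ..., 2, 1) = n−1. -/
/-- The winding statistic of a word: the word places the `n + 1` symbols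
(red `1`, black `1, …, n-1`, red `n-1`, encoded as `0, 1, …, n` in visiting order)
at positions `σ 0, σ 1, …, σ n` on the circle (unrolled, with red `1` at position `0`);
`wind n σ` counts the leftward jumps (wraps around the circle) of the path visiting
red `1`, then `1, 2, …, n-1`, then red `n-1`. -/
def wind (n : ℕ) (σ : Equiv.Perm (Fin (n + 1))) : ℕ :=
  (Finset.univ.filter fun t : Fin n => σ t.succ < σ t.castSucc).card

/-- The winding statistic `a'` takes exactly the values `0, 1, …, n-1`: it is bounded by
`n - 1`, every value in that range is attained, the word
`red1, 1, 2, …, n-1, red(n-1)` has `a' = 0`, and the word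
`red1, red(n-1), n-1, …, 2, 1` has `a' = n-1`. -/
theorem wind_statistic (n : ℕ) (hn : 2 ≤ n) :
    (∀ σ : Equiv.Perm (Fin (n + 1)), σ 0 = 0 → wind n σ ≤ n - 1) ∧
    (∀ v : ℕ, v ≤ n - 1 → ∃ σ : Equiv.Perm (Fin (n + 1)), σ 0 = 0 ∧ wind n σ = v) ∧
    wind n (Equiv.refl _) = 0 ∧
    (∀ σ : Equiv.Perm (Fin (n + 1)), σ 0 = 0 → (σ (Fin.last n)).1 = 1 →
      (∀ m : Fin (n + 1), 0 < m.1 → m.1 < n → (σ m).1 = n + 1 - m.1) →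
      wind n σ = n - 1) := by
  have hn0 : 0 < n := by omega
  refine ⟨?_, ?_, ?_, ?_⟩
  · -- bound
    intro σ h0
    have hsub : (Finset.univ.filter fun t : Fin n => σ t.succ < σ t.castSucc)
        ⊆ Finset.univ.erase (⟨0, hn0⟩ : Fin n) := by
      intro t ht
      simp only [Finset.mem_filter, Finset.mem_univ, true_and] at ht
      simp only [Finset.mem_erase, Finset.mem_univ, and_true]
      intro h
      subst h
      have h1 : (⟨0, hn0⟩ : Fin n).castSucc = 0 := rfl
      rw [h1, h0] at ht
      exact absurd ht (by simp [Fin.lt_iff_val_lt_val])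
    calc (Finset.univ.filter fun t : Fin n => σ t.succ < σ t.castSucc).card
        ≤ (Finset.univ.erase (⟨0, hn0⟩ : Fin n)).card := Finset.card_le_card hsub
      _ = n - 1 := by
          rw [Finset.card_erase_of_mem (Finset.mem_univ _)]
          simp
  · -- surjectivity
    intro v hv
    have hv' : v + 1 ≤ n := by omega
    set f : Fin (n + 1) → Fin (n + 1) := fun k =>
      if h : 1 ≤ k.1 ∧ k.1 ≤ v + 1 then ⟨v + 2 - k.1, by omega⟩ else k with hf
    have hinv : Function.Involutive f := by
      intro k
      simp only [hf]
      split_ifs with h1 h2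
      · exact Fin.ext (by simp; omega)
      · exfalso; simp at h2; omega
      · rfl
    refine ⟨⟨f, f, hinv.leftInverse, hinv.rightInverse⟩, ?_, ?_⟩
    · show f 0 = 0
      simp [hf]
    · show (Finset.univ.filter fun t : Fin n => f t.succ < f t.castSucc).card = v
      have hset : (Finset.univ.filter fun t : Fin n => f t.succ < f t.castSucc)
          = Finset.Icc (⟨1, by omega⟩ : Fin n) ⟨v, by omega⟩ := by
        ext t
        simp only [Finset.mem_filter, Finset.mem_univ, true_and, Finset.mem_Icc,
          Fin.le_def, hf, Fin.lt_iff_val_lt_val, Fin.val_succ, Fin.coe_castSucc]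
        have ht := t.2
        split_ifs with h1 h2 <;> simp_all <;> omega
      rw [hset, Fin.card_Icc]
      simp
  · -- identity
    have : (Finset.univ.filter fun t : Fin n =>
        (Equiv.refl (Fin (n+1))) t.succ < (Equiv.refl (Fin (n+1))) t.castSucc) = ∅ := by
      apply Finset.filter_eq_empty_iff.2
      intro t _
      simp [Fin.lt_iff_val_lt_val]
    show (Finset.univ.filter _).card = 0
    rw [this, Finset.card_empty]
  · -- reverse word
    intro σ h0 hlast hmid
    have hset : (Finset.univ.filter fun t : Fin n => σ t.succ < σ t.castSucc)
        = Finset.univ.erase (⟨0, hn0⟩ : Fin n) := by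
      ext t
      simp only [Finset.mem_filter, Finset.mem_univ, true_and, Finset.mem_erase, and_true]
      constructor
      · intro ht h
        subst h
        have h1 : (⟨0, hn0⟩ : Fin n).castSucc = 0 := rfl
        rw [h1, h0] at ht
        exact absurd ht (by simp [Fin.lt_iff_val_lt_val])
      · intro h
        have htpos : 0 < t.1 := by
          rcases Nat.eq_zero_or_pos t.1 with h'|h'
          · exact absurd (Fin.ext h') h
          · exact h'
        have hc : (σ t.castSucc).1 = n + 1 - t.1 := hmid t.castSucc htpos (by simp [t.2])
        rw [Fin.lt_iff_val_lt_val, hc]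
        rcases Nat.lt_or_ge (t.1 + 1) n with h'|h'
        · have hs : (σ t.succ).1 = n + 1 - (t.1 + 1) := hmid t.succ (by simp) (by simpa)
          rw [hs]; omega
        · have ht1 : t.1 + 1 = n := by have := t.2; omega
          have hts : t.succ = Fin.last n := Fin.ext (by simp [ht1])
          rw [hts, hlast]
          have := t.2; omega
    rw [wind, hset, Finset.card_erase_of_mem (Finset.mem_univ _)]
    simp
end
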